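/- arXiv:2304.02480 — 2 statements merged into one kernel-verified Lean document; each statement's English description precedes it below -/
import Mathlib

section
/- Let A be a finite nonempty set, let β > 0 and ε ≥ 0 be real numbers, and let x, y : A → ℝ satisfy |x(a) − y(a)| ≤ ε for every a ∈ A. Let p and q be the softmax distributions on A with inverse temperature β and logits x and y respectively. Then the total variation distance satisfies (1/2) Σ_{a∈A} |p(a) − q(a)| ≤ sinh(2βε). -/
/-- The softmax distribution on a finite set `A` with inverse temperature `β`
and logits `x`. -/
noncomputable def softmax {A : Type*} [Fintype A] (β : ℝ) (x : A → ℝ) (a : A) : ℝ :=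
  Real.exp (β * x a) / ∑ a' : A, Real.exp (β * x a')

/-- The total variation distance between two distributions on a finite set. -/
noncomputable def tvDist {A : Type*} [Fintype A] (p q : A → ℝ) : ℝ :=
  (1 / 2) * ∑ a : A, |p a - q a|

lemma softmax_ratio {A : Type*} [Fintype A] [Nonempty A]
    (β ε : ℝ) (hβ : 0 < β) (hε : 0 ≤ ε)
    (x y : A → ℝ) (hxy : ∀ a : A, |x a - y a| ≤ ε) (a : A) :
    Real.exp (-(2 * β * ε)) * softmax β y a ≤ softmax β x a := by
  have hSx : 0 < ∑ a' : A, Real.exp (β * x a') :=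
    Finset.sum_pos (fun i _ => Real.exp_pos _) Finset.univ_nonempty
  have hSy : 0 < ∑ a' : A, Real.exp (β * y a') :=
    Finset.sum_pos (fun i _ => Real.exp_pos _) Finset.univ_nonempty
  have h1 : Real.exp (β * y a) ≤ Real.exp (β * ε) * Real.exp (β * x a) := by
    rw [← Real.exp_add]
    apply Real.exp_le_exp.2
    have := abs_le.1 (hxy a)
    nlinarith [this.1, this.2]
  have h2 : (∑ a' : A, Real.exp (β * x a')) ≤
      Real.exp (β * ε) * ∑ a' : A, Real.exp (β * y a') := by
    rw [Finset.mul_sum]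
    apply Finset.sum_le_sum
    intro i _
    rw [← Real.exp_add]
    apply Real.exp_le_exp.2
    have := abs_le.1 (hxy i)
    nlinarith [this.1, this.2]
  unfold softmax
  rw [mul_div_assoc', div_le_div_iff₀ hSy hSx]
  · have hexp : Real.exp (-(2 * β * ε)) * (Real.exp (β * ε) * Real.exp (β * ε)) = 1 := by
      rw [← Real.exp_add, ← Real.exp_add, show -(2*β*ε)+(β*ε+β*ε) = 0 by ring, Real.exp_zero]
    calc Real.exp (-(2 * β * ε)) * Real.exp (β * y a) * (∑ a' : A, Real.exp (β * x a'))
        ≤ Real.exp (-(2 * β * ε)) * (Real.exp (β * ε) * Real.exp (β * x a)) *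
          (Real.exp (β * ε) * ∑ a' : A, Real.exp (β * y a')) := by
          apply mul_le_mul
          · exact mul_le_mul_of_nonneg_left h1 (Real.exp_pos _).le
          · exact h2
          · exact hSx.le
          · positivity
      _ = Real.exp (β * x a) * ∑ a' : A, Real.exp (β * y a') := by
          rw [show Real.exp (-(2 * β * ε)) * (Real.exp (β * ε) * Real.exp (β * x a)) *
            (Real.exp (β * ε) * ∑ a' : A, Real.exp (β * y a')) =
            (Real.exp (-(2 * β * ε)) * (Real.exp (β * ε) * Real.exp (β * ε))) *
            (Real.exp (β * x a) * ∑ a' : A, Real.exp (β * y a')) by ring, hexp, one_mul]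

lemma softmax_sum {A : Type*} [Fintype A] [Nonempty A] (β : ℝ) (x : A → ℝ) :
    ∑ a : A, softmax β x a = 1 := by
  have hSx : 0 < ∑ a' : A, Real.exp (β * x a') :=
    Finset.sum_pos (fun i _ => Real.exp_pos _) Finset.univ_nonempty
  unfold softmax
  rw [← Finset.sum_div, div_self hSx.ne']

/-- If two logit functions `x, y` differ by at most `ε` pointwise, then the total
variation distance between their softmax distributions (with inverse temperature
`β > 0`) is at most `sinh (2βε)`. -/
theorem tvDist_softmax_le_sinh {A : Type*} [Fintype A] [Nonempty A]
    (β ε : ℝ) (hβ : 0 < β) (hε : 0 ≤ ε)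
    (x y : A → ℝ) (hxy : ∀ a : A, |x a - y a| ≤ ε) :
    tvDist (softmax β x) (softmax β y) ≤ Real.sinh (2 * β * ε) := by
  set t := 2 * β * ε with ht
  have ht0 : 0 ≤ t := by positivity
  have hxy' : ∀ a : A, |y a - x a| ≤ ε := fun a => by
    rw [abs_sub_comm]; exact hxy a
  have h1 := softmax_ratio β ε hβ hε x y hxy
  have h2 := softmax_ratio β ε hβ hε y x hxy'
  have hnn : ∀ a : A, 0 ≤ softmax β x a ∧ 0 ≤ softmax β y a := by
    intro a
    have hSx : 0 < ∑ a' : A, Real.exp (β * x a') :=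
      Finset.sum_pos (fun i _ => Real.exp_pos _) Finset.univ_nonempty
    have hSy : 0 < ∑ a' : A, Real.exp (β * y a') :=
      Finset.sum_pos (fun i _ => Real.exp_pos _) Finset.univ_nonempty
    constructor <;> · unfold softmax; positivity
  have hexple : Real.exp (-t) ≤ 1 := Real.exp_le_one_iff.2 (by linarith)
  have key : ∀ a : A, |softmax β x a - softmax β y a| ≤
      (1 - Real.exp (-t)) * (softmax β x a + softmax β y a) := by
    intro a
    have e1 := h1 a
    have e2 := h2 a
    have := (hnn a).1
    have := (hnn a).2
    rw [abs_le]
    constructor <;> nlinarith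
  have hsum : ∑ a : A, |softmax β x a - softmax β y a| ≤
      (1 - Real.exp (-t)) * 2 := by
    calc ∑ a : A, |softmax β x a - softmax β y a|
        ≤ ∑ a : A, (1 - Real.exp (-t)) * (softmax β x a + softmax β y a) :=
          Finset.sum_le_sum (fun a _ => key a)
      _ = (1 - Real.exp (-t)) * 2 := by
          rw [← Finset.mul_sum, Finset.sum_add_distrib, softmax_sum, softmax_sum]
          ring
  unfold tvDist
  have hsinh : 1 - Real.exp (-t) ≤ Real.sinh t := by
    rw [Real.sinh_eq]
    have h := Real.exp_pos t
    have h' := Real.exp_pos (-t)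
    have hmul : Real.exp t * Real.exp (-t) = 1 := by
      rw [← Real.exp_add]; ring_nf; exact Real.exp_zero
    nlinarith [sq_nonneg (Real.exp t - 1)]
  linarith
end

section
/- Let S and A be finite nonempty sets, let γ ∈ [0,1), let T : S × A → PMF(S) be a transition kernel, let ρ₀ be a probability distribution on S, and let π and π_E be stationary policies (maps S → PMF(A)). Let d_π(s) = (1−γ) Σ_{t=0}^{∞} γ^t P(s_t = s | π) denote the discounted state occupancy measure of the Markov chain induced by starting at s₀ ∼ ρ₀ and following a_t ∼ π(·|s_t), s_{t+1} ∼ T(·|s_t, a_t), and similarly d_{π_E} for π_E. Then D_TV(d_π, d_{π_E}) ≤ (γ/(1−γ)) · Σ_{s∈S} d_{π_E}(s) · D_TV(π(·|s), π_E(·|s)). -/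
/-- `stateDist T π ρ₀ t s` is the probability `P(s_t = s | π)` that the Markov chain
induced by the policy `π` in the MDP with transition kernel `T` and initial state
distribution `ρ₀` is in state `s` at time `t`. -/
noncomputable def stateDist {S A : Type*} [Fintype S] [Fintype A]
    (T : S → A → PMF S) (π : S → PMF A) (ρ₀ : PMF S) : ℕ → S → ℝ
  | 0, s => (ρ₀ s).toReal
  | t + 1, s' =>
      ∑ s : S, ∑ a : A, stateDist T π ρ₀ t s * ((π s) a).toReal * ((T s a) s').toReal

/-- The discounted state occupancy measure `d_π(s) = (1−γ) Σ_t γ^t P(s_t = s | π)`. -/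
noncomputable def stateOcc {S A : Type*} [Fintype S] [Fintype A]
    (T : S → A → PMF S) (π : S → PMF A) (ρ₀ : PMF S) (γ : ℝ) (s : S) : ℝ :=
  (1 - γ) * ∑' t : ℕ, γ ^ t * stateDist T π ρ₀ t s

section
variable {S A : Type*} [Fintype S] [Fintype A]

lemma pmf_sum_toReal (p : PMF S) : ∑ s, (p s).toReal = 1 := by
  have h := p.tsum_coe
  rw [tsum_fintype] at h
  have h2 : (∑ s, p s).toReal = 1 := by rw [h]; simp
  rwa [ENNReal.toReal_sum (fun s _ => p.apply_ne_top s)] at h2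

lemma stateDist_nonneg (T : S → A → PMF S) (π : S → PMF A) (ρ₀ : PMF S) :
    ∀ t s, 0 ≤ stateDist T π ρ₀ t s := by
  intro t
  induction t with
  | zero => intro s; simp [stateDist]
  | succ t ih =>
    intro s'
    apply Finset.sum_nonneg; intro s _
    apply Finset.sum_nonneg; intro a _
    exact mul_nonneg (mul_nonneg (ih s) ENNReal.toReal_nonneg) ENNReal.toReal_nonneg

lemma stateDist_sum (T : S → A → PMF S) (π : S → PMF A) (ρ₀ : PMF S) :
    ∀ t, ∑ s, stateDist T π ρ₀ t s = 1 := by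
  intro t
  induction t with
  | zero => simpa [stateDist] using pmf_sum_toReal ρ₀
  | succ t ih =>
    show ∑ s' : S, ∑ s : S, ∑ a : A, _ = 1
    rw [Finset.sum_comm]
    have : ∀ s : S, ∑ s' : S, ∑ a : A,
        stateDist T π ρ₀ t s * ((π s) a).toReal * ((T s a) s').toReal
        = stateDist T π ρ₀ t s := by
      intro s
      rw [Finset.sum_comm]
      have : ∀ a : A, ∑ s' : S,
          stateDist T π ρ₀ t s * ((π s) a).toReal * ((T s a) s').toReal
          = stateDist T π ρ₀ t s * ((π s) a).toReal := by
        intro a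
        rw [← Finset.mul_sum, pmf_sum_toReal, mul_one]
      rw [Finset.sum_congr rfl (fun a _ => this a), ← Finset.mul_sum,
        pmf_sum_toReal, mul_one]
    rw [Finset.sum_congr rfl (fun s _ => this s), ih]

lemma stateDist_le_one (T : S → A → PMF S) (π : S → PMF A) (ρ₀ : PMF S) (t : ℕ) (s : S) :
    stateDist T π ρ₀ t s ≤ 1 := by
  calc stateDist T π ρ₀ t s ≤ ∑ s', stateDist T π ρ₀ t s' :=
        Finset.single_le_sum (fun s' _ => stateDist_nonneg T π ρ₀ t s') (Finset.mem_univ s)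
    _ = 1 := stateDist_sum T π ρ₀ t

lemma summable_aux {γ : ℝ} (hγ0 : 0 ≤ γ) (hγ1 : γ < 1)
    (T : S → A → PMF S) (π : S → PMF A) (ρ₀ : PMF S) (s : S) :
    Summable (fun t => γ ^ t * stateDist T π ρ₀ t s) := by
  apply Summable.of_nonneg_of_le
    (fun t => mul_nonneg (pow_nonneg hγ0 t) (stateDist_nonneg T π ρ₀ t s))
    (fun t => ?_) (summable_geometric_of_lt_one hγ0 hγ1)
  calc γ ^ t * stateDist T π ρ₀ t s ≤ γ ^ t * 1 :=
        mul_le_mul_of_nonneg_left (stateDist_le_one T π ρ₀ t s) (pow_nonneg hγ0 t)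
    _ = γ ^ t := mul_one _

end

section
variable {S A : Type*} [Fintype S] [Fintype A]

noncomputable def occAux (T : S → A → PMF S) (π : S → PMF A) (ρ₀ : PMF S) (γ : ℝ) (s : S) : ℝ :=
  ∑' t : ℕ, γ ^ t * stateDist T π ρ₀ t s

lemma occAux_nonneg {γ : ℝ} (hγ0 : 0 ≤ γ)
    (T : S → A → PMF S) (π : S → PMF A) (ρ₀ : PMF S) (s : S) :
    0 ≤ occAux T π ρ₀ γ s :=
  tsum_nonneg (fun t => mul_nonneg (pow_nonneg hγ0 t) (stateDist_nonneg T π ρ₀ t s))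

lemma occAux_bellman {γ : ℝ} (hγ0 : 0 ≤ γ) (hγ1 : γ < 1)
    (T : S → A → PMF S) (π : S → PMF A) (ρ₀ : PMF S) (s' : S) :
    occAux T π ρ₀ γ s' = (ρ₀ s').toReal +
      γ * ∑ s : S, ∑ a : A, occAux T π ρ₀ γ s * ((π s) a).toReal * ((T s a) s').toReal := by
  have hsum : ∀ s, Summable (fun t => γ ^ t * stateDist T π ρ₀ t s) :=
    summable_aux hγ0 hγ1 T π ρ₀
  rw [occAux, Summable.tsum_eq_zero_add (hsum s')]
  have h0 : γ ^ 0 * stateDist T π ρ₀ 0 s' = (ρ₀ s').toReal := by simp [stateDist]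
  rw [h0]
  congr 1
  have hstep : ∀ t : ℕ, γ ^ (t + 1) * stateDist T π ρ₀ (t + 1) s'
      = ∑ s : S, ∑ a : A,
          γ * (γ ^ t * stateDist T π ρ₀ t s) * ((π s) a).toReal * ((T s a) s').toReal := by
    intro t
    show γ ^ (t + 1) * (∑ s : S, ∑ a : A,
        stateDist T π ρ₀ t s * ((π s) a).toReal * ((T s a) s').toReal) = _
    rw [Finset.mul_sum]
    congr 1; ext s
    rw [Finset.mul_sum]
    congr 1; ext a
    ring
  have hsum2 : ∀ s : S, ∀ a : A, Summable (fun t =>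
      γ * (γ ^ t * stateDist T π ρ₀ t s) * ((π s) a).toReal * ((T s a) s').toReal) := by
    intro s a
    simpa [mul_assoc, mul_comm, mul_left_comm] using
      (((hsum s).mul_left γ).mul_right ((π s) a).toReal).mul_right ((T s a) s').toReal
  calc (∑' t : ℕ, γ ^ (t + 1) * stateDist T π ρ₀ (t + 1) s')
      = ∑' t : ℕ, ∑ s : S, ∑ a : A,
          γ * (γ ^ t * stateDist T π ρ₀ t s) * ((π s) a).toReal * ((T s a) s').toReal := by
        exact tsum_congr hstep
    _ = ∑ s : S, ∑' t : ℕ, ∑ a : A,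
          γ * (γ ^ t * stateDist T π ρ₀ t s) * ((π s) a).toReal * ((T s a) s').toReal := by
        exact Summable.tsum_finsetSum (fun s _ => summable_sum (fun a _ => hsum2 s a))
    _ = ∑ s : S, ∑ a : A, ∑' t : ℕ,
          γ * (γ ^ t * stateDist T π ρ₀ t s) * ((π s) a).toReal * ((T s a) s').toReal := by
        exact Finset.sum_congr rfl (fun s _ => Summable.tsum_finsetSum (fun a _ => hsum2 s a))
    _ = γ * ∑ s : S, ∑ a : A, occAux T π ρ₀ γ s * ((π s) a).toReal * ((T s a) s').toReal := by
        rw [Finset.mul_sum]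
        refine Finset.sum_congr rfl (fun s _ => ?_)
        rw [Finset.mul_sum]
        refine Finset.sum_congr rfl (fun a _ => ?_)
        rw [tsum_mul_right, tsum_mul_right, tsum_mul_left, occAux]
        ring

end

theorem tvDist_stateOcc_le' {S A : Type*} [Fintype S] [Fintype A]
    [Nonempty S] [Nonempty A]
    (γ : ℝ) (hγ0 : 0 ≤ γ) (hγ1 : γ < 1)
    (T : S → A → PMF S) (ρ₀ : PMF S) (π πE : S → PMF A) :
    (1/2 : ℝ) * ∑ s : S, |(1 - γ) * occAux T π ρ₀ γ s - (1 - γ) * occAux T πE ρ₀ γ s| ≤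
      (γ / (1 - γ)) *
        ∑ s : S, ((1 - γ) * occAux T πE ρ₀ γ s) *
          ((1/2 : ℝ) * ∑ a : A, |((π s) a).toReal - ((πE s) a).toReal|) := by
  set f := occAux T π ρ₀ γ with hf
  set g := occAux T πE ρ₀ γ with hg
  set X : ℝ := ∑ s : S, |f s - g s| with hX
  set Y : ℝ := ∑ s : S, g s * ∑ a : A, |((π s) a).toReal - ((πE s) a).toReal| with hY
  have h1γ : (0 : ℝ) < 1 - γ := by linarith
  -- key inequality: X ≤ γ * (X + Y)
  have key : X ≤ γ * (X + Y) := by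
    have hdiff : ∀ s' : S, f s' - g s' = γ * ∑ s : S, ∑ a : A,
        (f s * ((π s) a).toReal - g s * ((πE s) a).toReal) * ((T s a) s').toReal := by
      intro s'
      rw [hf, hg, occAux_bellman hγ0 hγ1 T π ρ₀ s', occAux_bellman hγ0 hγ1 T πE ρ₀ s']
      rw [← hf, ← hg]
      have expand : ∑ s : S, ∑ a : A,
          (f s * ((π s) a).toReal - g s * ((πE s) a).toReal) * ((T s a) s').toReal
          = (∑ s : S, ∑ a : A, f s * ((π s) a).toReal * ((T s a) s').toReal)
            - ∑ s : S, ∑ a : A, g s * ((πE s) a).toReal * ((T s a) s').toReal := by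
        rw [← Finset.sum_sub_distrib]
        refine Finset.sum_congr rfl (fun s _ => ?_)
        rw [← Finset.sum_sub_distrib]
        refine Finset.sum_congr rfl (fun a _ => ?_)
        ring
      rw [expand]
      ring
    have habs : ∀ s' : S, |f s' - g s'| ≤ γ * ∑ s : S, ∑ a : A,
        (|f s - g s| * ((π s) a).toReal + g s * |((π s) a).toReal - ((πE s) a).toReal|)
          * ((T s a) s').toReal := by
      intro s'
      rw [hdiff s', abs_mul, abs_of_nonneg hγ0]
      apply mul_le_mul_of_nonneg_left _ hγ0
      calc |∑ s : S, ∑ a : A,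
            (f s * ((π s) a).toReal - g s * ((πE s) a).toReal) * ((T s a) s').toReal|
          ≤ ∑ s : S, |∑ a : A,
            (f s * ((π s) a).toReal - g s * ((πE s) a).toReal) * ((T s a) s').toReal| :=
            Finset.abs_sum_le_sum_abs _ _
        _ ≤ ∑ s : S, ∑ a : A,
            |(f s * ((π s) a).toReal - g s * ((πE s) a).toReal) * ((T s a) s').toReal| :=
            Finset.sum_le_sum (fun s _ => Finset.abs_sum_le_sum_abs _ _)
        _ ≤ ∑ s : S, ∑ a : A,
            (|f s - g s| * ((π s) a).toReal + g s * |((π s) a).toReal - ((πE s) a).toReal|)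
              * ((T s a) s').toReal := by
            refine Finset.sum_le_sum (fun s _ => Finset.sum_le_sum (fun a _ => ?_))
            rw [abs_mul, abs_of_nonneg (ENNReal.toReal_nonneg)]
            apply mul_le_mul_of_nonneg_right _ ENNReal.toReal_nonneg
            calc |f s * ((π s) a).toReal - g s * ((πE s) a).toReal|
                = |(f s - g s) * ((π s) a).toReal
                    + g s * (((π s) a).toReal - ((πE s) a).toReal)| := by ring_nf
              _ ≤ |(f s - g s) * ((π s) a).toReal|
                    + |g s * (((π s) a).toReal - ((πE s) a).toReal)| := abs_add_le _ _
              _ = |f s - g s| * ((π s) a).toReal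
                    + g s * |((π s) a).toReal - ((πE s) a).toReal| := by
                  rw [abs_mul, abs_mul, abs_of_nonneg ENNReal.toReal_nonneg,
                    abs_of_nonneg (occAux_nonneg hγ0 T πE ρ₀ s)]
    calc X ≤ ∑ s' : S, γ * ∑ s : S, ∑ a : A,
          (|f s - g s| * ((π s) a).toReal + g s * |((π s) a).toReal - ((πE s) a).toReal|)
            * ((T s a) s').toReal := Finset.sum_le_sum (fun s' _ => habs s')
      _ = γ * (X + Y) := by
          rw [← Finset.mul_sum]
          congr 1
          rw [Finset.sum_comm]
          have : ∀ s : S, ∑ s' : S, ∑ a : A,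
              (|f s - g s| * ((π s) a).toReal + g s * |((π s) a).toReal - ((πE s) a).toReal|)
                * ((T s a) s').toReal
              = |f s - g s| + g s * ∑ a : A, |((π s) a).toReal - ((πE s) a).toReal| := by
            intro s
            rw [Finset.sum_comm]
            have h2 : ∀ a : A, ∑ s' : S,
                (|f s - g s| * ((π s) a).toReal + g s * |((π s) a).toReal - ((πE s) a).toReal|)
                  * ((T s a) s').toReal
                = |f s - g s| * ((π s) a).toReal
                    + g s * |((π s) a).toReal - ((πE s) a).toReal| := by
              intro a
              rw [← Finset.mul_sum, pmf_sum_toReal, mul_one]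
            rw [Finset.sum_congr rfl (fun a _ => h2 a), Finset.sum_add_distrib,
              ← Finset.mul_sum, pmf_sum_toReal, mul_one, ← Finset.mul_sum]
          rw [Finset.sum_congr rfl (fun s _ => this s), Finset.sum_add_distrib]
  -- from key: (1 - γ) * X ≤ γ * Y
  have key2 : (1 - γ) * X ≤ γ * Y := by nlinarith [key]
  -- now massage the goal
  have hYnn : 0 ≤ Y := by
    apply Finset.sum_nonneg
    intro s _
    exact mul_nonneg (occAux_nonneg hγ0 T πE ρ₀ s)
      (Finset.sum_nonneg (fun a _ => abs_nonneg _))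
  have lhs_eq : (1/2 : ℝ) * ∑ s : S, |(1 - γ) * f s - (1 - γ) * g s|
      = (1/2) * ((1 - γ) * X) := by
    rw [hX]
    simp only [Finset.mul_sum]
    refine Finset.sum_congr rfl (fun s _ => ?_)
    rw [← mul_sub, abs_mul, abs_of_nonneg h1γ.le]
  have rhs_eq : (γ / (1 - γ)) * ∑ s : S, ((1 - γ) * g s) *
        ((1/2 : ℝ) * ∑ a : A, |((π s) a).toReal - ((πE s) a).toReal|)
      = (1/2) * (γ * Y) := by
    have hcanc : γ / (1 - γ) * (1 - γ) = γ := div_mul_cancel₀ γ h1γ.ne'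
    have hterm : ∀ s ∈ Finset.univ (α := S),
        (γ / (1 - γ)) * (((1 - γ) * g s) *
          ((1/2 : ℝ) * ∑ a : A, |((π s) a).toReal - ((πE s) a).toReal|))
        = 1/2 * (γ * (g s * ∑ a : A, |((π s) a).toReal - ((πE s) a).toReal|)) := by
      intro s _
      calc (γ / (1 - γ)) * (((1 - γ) * g s) *
            ((1/2 : ℝ) * ∑ a : A, |((π s) a).toReal - ((πE s) a).toReal|))
          = (γ / (1 - γ) * (1 - γ)) *
            ((1/2 : ℝ) * (g s * ∑ a : A, |((π s) a).toReal - ((πE s) a).toReal|)) := by ring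
        _ = 1/2 * (γ * (g s * ∑ a : A, |((π s) a).toReal - ((πE s) a).toReal|)) := by
            rw [hcanc]; ring
    calc (γ / (1 - γ)) * ∑ s : S, ((1 - γ) * g s) *
          ((1/2 : ℝ) * ∑ a : A, |((π s) a).toReal - ((πE s) a).toReal|)
        = ∑ s : S, (γ / (1 - γ)) * (((1 - γ) * g s) *
            ((1/2 : ℝ) * ∑ a : A, |((π s) a).toReal - ((πE s) a).toReal|)) :=
          Finset.mul_sum _ _ _
      _ = ∑ s : S, 1/2 * (γ * (g s * ∑ a : A, |((π s) a).toReal - ((πE s) a).toReal|)) :=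
          Finset.sum_congr rfl hterm
      _ = 1/2 * (γ * Y) := by
          rw [hY]; simp only [Finset.mul_sum, mul_assoc]
  rw [lhs_eq, rhs_eq]
  linarith [key2]

/-- The total variation distance between the discounted state occupancy measures of
two policies is bounded by `γ/(1−γ)` times the expected (under `d_{π_E}`) total
variation distance between the policies. -/
theorem tvDist_stateOcc_le {S A : Type*} [Fintype S] [Fintype A]
    [Nonempty S] [Nonempty A]
    (γ : ℝ) (hγ0 : 0 ≤ γ) (hγ1 : γ < 1)
    (T : S → A → PMF S) (ρ₀ : PMF S) (π πE : S → PMF A) :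
    tvDist (stateOcc T π ρ₀ γ) (stateOcc T πE ρ₀ γ) ≤
      (γ / (1 - γ)) *
        ∑ s : S, stateOcc T πE ρ₀ γ s *
          tvDist (fun a => ((π s) a).toReal) (fun a => ((πE s) a).toReal) := by
  have h := tvDist_stateOcc_le' γ hγ0 hγ1 T ρ₀ π πE
  have hso : ∀ (π' : S → PMF A) (s : S), stateOcc T π' ρ₀ γ s = (1 - γ) * occAux T π' ρ₀ γ s :=
    fun π' s => rfl
  simpa [tvDist, hso] using h
end
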